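/- Let Ω be the half-open real interval (0,1] with the induced order, and write 𝟙 for the element 1 of Ω. Let ℒ := { f : Ω → ℝ≥0∞ | f is Scott-continuous }, and let E := { f : Ω → ℝ≥0∞ | ∃ q ∈ [0,1] (real) and h ∈ ℒ with h(𝟙) ≤ 1 such that f(x) = 2·q + (1−q)·h(x) for all x ∈ Ω }. For f, g ∈ E say that f is way below g in E (f ≪_E g) if for every nonempty subset D ⊆ E that is directed in the pointwise order and satisfies g(x) ≤ ⨆_{h ∈ D} h(x) for all x ∈ Ω, there exists h ∈ D with f(x) ≤ h(x) for all x. Then the constant functions with values 1, 2 and 1/2 all belong to E, the constant function 1 is way below the constant function 2 in E, but the constant function 1/2 is NOT way below the constant function 1 in E. (Hence scalar multiplication by 1/2 does not preserve the way-below relation of the continuous Kegelspitze E.) -/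

import Mathlib

open scoped ENNReal

/-- The half-open unit interval `(0,1]` with the induced order. -/
abbrev Omega : Type := Set.Ioc (0 : ℝ) 1

/-- The top element `1` of `Omega`. -/
def omegaOne : Omega := ⟨1, by norm_num⟩

/-- The subset `E` of the Scott-continuous functions `Ω → ℝ≥0∞`: those representable as a
convex combination `2q + (1-q)·h` of the constant function `2` and a function `h` bounded
by `1`. -/
def EE : Set (Omega → ℝ≥0∞) :=
  {f | ∃ q : ℝ, q ∈ Set.Icc (0 : ℝ) 1 ∧
    ∃ h : Omega → ℝ≥0∞, ScottContinuous h ∧ h omegaOne ≤ 1 ∧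
      ∀ x : Omega, f x = 2 * ENNReal.ofReal q + ENNReal.ofReal (1 - q) * h x}

/-- The way-below relation of the dcpo `E`, phrased via pointwise suprema of directed
families in `E`. -/
def wayBelowEE (f g : Omega → ℝ≥0∞) : Prop :=
  ∀ D : Set (Omega → ℝ≥0∞), D ⊆ EE → D.Nonempty → DirectedOn (· ≤ ·) D →
    (∀ x : Omega, g x ≤ ⨆ h ∈ D, h x) → ∃ h ∈ D, ∀ x : Omega, f x ≤ h x

lemma scottConst (c : ℝ≥0∞) : ScottContinuous (fun _ : Omega => c) := by
  intro d hd hdir a ha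
  rw [Set.Nonempty.image_const hd]
  exact isLUB_singleton

/-- The indicator function of `(t, 1]`. -/
noncomputable def ind (t : ℝ) : Omega → ℝ≥0∞ := fun x => if t < x.1 then 1 else 0

lemma ind_scott {t : ℝ} (ht : t ∈ Set.Ioo (0:ℝ) 1) : ScottContinuous (ind t) := by
  intro d hd hdir a ha
  by_cases h : t < a.1
  · have h1 : ind t a = 1 := if_pos h
    rw [h1]
    constructor
    · rintro _ ⟨x, hx, rfl⟩
      unfold ind; split <;> simp
    · intro b hb
      have hex : ∃ x ∈ d, t < x.1 := by
        by_contra hcon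
        push_neg at hcon
        have hub : (⟨t, ht.1, ht.2.le⟩ : Omega) ∈ upperBounds d := by
          intro x hx
          exact Subtype.coe_le_coe.mp (hcon x hx)
        exact absurd (lt_of_lt_of_le h (ha.2 hub)) (lt_irrefl _)
      obtain ⟨x, hx, hxt⟩ := hex
      have hx1 : ind t x = 1 := if_pos hxt
      exact hx1 ▸ hb ⟨x, hx, rfl⟩
  · have h0 : ind t a = 0 := if_neg h
    rw [h0]
    constructor
    · rintro _ ⟨x, hx, rfl⟩
      have hxa : (x : ℝ) ≤ a := ha.1 hx
      have : ¬ t < x.1 := fun hc => h (lt_of_lt_of_le hc hxa)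
      simp [ind, this]
    · intro b hb
      exact zero_le

lemma const_mem_EE {c : ℝ≥0∞} {q : ℝ} (hq : q ∈ Set.Icc (0:ℝ) 1)
    (hc : c = 2 * ENNReal.ofReal q) : (fun _ : Omega => c) ∈ EE := by
  refine ⟨q, hq, fun _ => 0, scottConst 0, zero_le, fun x => ?_⟩
  simp [hc]

/-- In the continuous Kegelspitze `E`, the constant function `1` is way below the constant
function `2`, but `1/2` is not way below `1`: scalar multiplication by `1/2` does not
preserve the way-below relation. -/
theorem EE_way_below_not_preserved_by_smul :
    (fun _ : Omega => (1 : ℝ≥0∞)) ∈ EE ∧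
    (fun _ : Omega => (2 : ℝ≥0∞)) ∈ EE ∧
    (fun _ : Omega => (1 / 2 : ℝ≥0∞)) ∈ EE ∧
    wayBelowEE (fun _ => (1 : ℝ≥0∞)) (fun _ => (2 : ℝ≥0∞)) ∧
    ¬ wayBelowEE (fun _ => (1 / 2 : ℝ≥0∞)) (fun _ => (1 : ℝ≥0∞)) := by
  refine ⟨const_mem_EE (q := 1/2) (by norm_num) ?_,
    const_mem_EE (q := 1) (by norm_num) ?_,
    const_mem_EE (q := 1/4) (by norm_num) ?_, ?_, ?_⟩
  · rw [show ENNReal.ofReal (1/2) = 1/2 by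
      rw [ENNReal.ofReal_div_of_pos] <;> norm_num]
    rw [one_div]
    exact (ENNReal.mul_inv_cancel (by norm_num) (by norm_num)).symm
  · norm_num
  · rw [show ENNReal.ofReal (1/4) = 1/4 by
      rw [ENNReal.ofReal_div_of_pos] <;> norm_num]
    rw [mul_one_div, ENNReal.div_eq_div_iff] <;> norm_num
  · -- 1 ≪ 2
    intro D hDE hne hdir hsup
    have hex : ∃ f ∈ D, (3/2 : ℝ≥0∞) < f omegaOne := by
      by_contra hcon
      push_neg at hcon
      have hle32 : (⨆ h ∈ D, h omegaOne) ≤ 3/2 := iSup₂_le hcon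
      have h2 := le_trans (hsup omegaOne) hle32
      exact absurd h2 (by
        rw [not_le, ENNReal.div_lt_iff (by norm_num) (by norm_num)]; norm_num)
    obtain ⟨f, hfD, hf⟩ := hex
    obtain ⟨q, hq, h, hsc, hh1, hrep⟩ := hDE hfD
    set a := ENNReal.ofReal q with ha
    have ha1 : a ≤ 1 := ENNReal.ofReal_le_one.mpr hq.2
    have hsub : ENNReal.ofReal (1 - q) = 1 - a := by
      rw [ENNReal.ofReal_sub _ hq.1, ENNReal.ofReal_one]
    have hfle : f omegaOne ≤ a + 1 := by
      rw [hrep omegaOne, hsub]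
      calc 2 * a + (1 - a) * h omegaOne ≤ 2 * a + (1 - a) * 1 := by gcongr
        _ = a + (a + (1 - a)) := by rw [two_mul, mul_one, add_assoc]
        _ = a + 1 := by rw [add_tsub_cancel_of_le ha1]
    have hhalf : (1/2 : ℝ≥0∞) ≤ a := by
      by_contra hcon
      push_neg at hcon
      have hle' : f omegaOne ≤ 1/2 + 1 :=
        le_trans hfle (add_le_add_left hcon.le 1)
      have h32 : (3/2 : ℝ≥0∞) < 1/2 + 1 := lt_of_lt_of_le hf hle'
      rw [one_div, show (2:ℝ≥0∞)⁻¹ + 1 = 3/2 from ?_] at h32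
      · exact lt_irrefl _ h32
      · rw [ENNReal.eq_div_iff (by norm_num) (by norm_num), mul_add,
          ENNReal.mul_inv_cancel (by norm_num) (by norm_num), mul_one]
        norm_num
    refine ⟨f, hfD, fun x => ?_⟩
    rw [hrep x]
    calc (1 : ℝ≥0∞) = 2 * (1/2) := by
          rw [one_div]
          exact (ENNReal.mul_inv_cancel (by norm_num) (by norm_num)).symm
      _ ≤ 2 * a := by gcongr
      _ ≤ 2 * a + ENNReal.ofReal (1 - q) * h x := le_self_add
  · -- ¬ 1/2 ≪ 1
    intro hwb
    set D : Set (Omega → ℝ≥0∞) := {f | ∃ t ∈ Set.Ioo (0:ℝ) 1, f = ind t} with hD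
    have hDE : D ⊆ EE := by
      rintro f ⟨t, ht, rfl⟩
      exact ⟨0, by norm_num, ind t, ind_scott ht, by
        simp [ind, omegaOne, ht.2], fun x => by simp⟩
    have hne : D.Nonempty := ⟨ind (1/2), 1/2, by norm_num, rfl⟩
    have hdir : DirectedOn (· ≤ ·) D := by
      rintro f ⟨t, ht, rfl⟩ g ⟨s, hs, rfl⟩
      refine ⟨ind (min t s),
        ⟨min t s, ⟨lt_min ht.1 hs.1, lt_of_le_of_lt (min_le_left _ _) ht.2⟩, rfl⟩, ?_, ?_⟩
      · intro x
        unfold ind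
        by_cases hx : t < x.1
        · rw [if_pos hx, if_pos (lt_of_le_of_lt (min_le_left _ _) hx)]
        · rw [if_neg hx]; exact zero_le
      · intro x
        unfold ind
        by_cases hx : s < x.1
        · rw [if_pos hx, if_pos (lt_of_le_of_lt (min_le_right _ _) hx)]
        · rw [if_neg hx]; exact zero_le
    have hsup : ∀ x : Omega, (1 : ℝ≥0∞) ≤ ⨆ h ∈ D, h x := by
      intro x
      have hx0 := x.2.1
      have hx1 := x.2.2
      have htm : (x.1/2 : ℝ) ∈ Set.Ioo (0:ℝ) 1 := ⟨by linarith, by linarith⟩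
      have hval : ind (x.1/2) x = 1 := if_pos (by linarith)
      calc (1 : ℝ≥0∞) = ind (x.1/2) x := hval.symm
        _ ≤ ⨆ h ∈ D, h x := le_iSup₂_of_le (ind (x.1/2)) ⟨x.1/2, htm, rfl⟩ le_rfl
    obtain ⟨f, hfD, hle⟩ := hwb D hDE hne hdir hsup
    obtain ⟨t, ht, rfl⟩ := hfD
    have hc := hle ⟨t, ht.1, ht.2.le⟩
    rw [show ind t ⟨t, ht.1, ht.2.le⟩ = 0 from if_neg (lt_irrefl t)] at hc
    norm_num at hc
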